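/- The polynomial f(x, y) = y(x⁵ + x y¹² + y¹⁵) (weighted homogeneous of type (16; 3, 1) with an isolated singularity at the origin) has Łojasiewicz exponent L(f) = 13. -/

import Mathlib

open MvPolynomial

/-- Euclidean norm of the gradient of a polynomial `f` at `x`. -/
noncomputable def gradNorm {n : ℕ} (f : MvPolynomial (Fin n) ℝ) (x : Fin n → ℝ) : ℝ :=
  Real.sqrt (∑ i, (eval x (pderiv i f)) ^ 2)

/-- Euclidean norm on `Fin n → ℝ`. -/
noncomputable def eNorm {n : ℕ} (x : Fin n → ℝ) : ℝ :=
  Real.sqrt (∑ i, (x i) ^ 2)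

/-- `f` is weighted homogeneous of type `(d; w)`: every monomial `x^α` appearing in `f`
satisfies `∑ i, α i * w i = d`. -/
def IsWeightedHomog {n : ℕ} (f : MvPolynomial (Fin n) ℝ) (w : Fin n → ℕ) (d : ℕ) : Prop :=
  ∀ α ∈ f.support, ∑ i, α i * w i = d

/-- `f` is non-degenerate (isolated singularity at the origin): in some neighborhood of `0`
the gradient of `f` vanishes only at the origin. -/
def Nondeg {n : ℕ} (f : MvPolynomial (Fin n) ℝ) : Prop :=
  ∃ U ∈ nhds (0 : Fin n → ℝ), ∀ x ∈ U, (∀ i, eval x (pderiv i f) = 0) → x = 0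

/-- The Łojasiewicz inequality `‖∇f(x)‖ ≥ C ‖x‖^lam` holds near `0` for some `C > 0`. -/
def LojIneq {n : ℕ} (f : MvPolynomial (Fin n) ℝ) (lam : ℝ) : Prop :=
  ∃ C > (0 : ℝ), ∃ U ∈ nhds (0 : Fin n → ℝ), ∀ x ∈ U, C * eNorm x ^ lam ≤ gradNorm f x

/-- The Łojasiewicz exponent of `f`: the infimum of all `lam > 0` for which the
Łojasiewicz inequality holds near the origin. -/
noncomputable def lojExp {n : ℕ} (f : MvPolynomial (Fin n) ℝ) : ℝ :=
  sInf {lam : ℝ | 0 < lam ∧ LojIneq f lam}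

/-- The weighted "radius" `ρ(x) = (∑ i |x i| ^ (2 / w i)) ^ (1/2)`. -/
noncomputable def rho {n : ℕ} (w : Fin n → ℕ) (x : Fin n → ℝ) : ℝ :=
  Real.sqrt (∑ i, |x i| ^ ((2 : ℝ) / (w i : ℝ)))

/-- The weighted norm of the gradient:
`‖grad_w f(x)‖_w = (∑ i ρ(x)^(2 wᵢ) |∂f/∂xᵢ(x)|²)^(1/2)`. -/
noncomputable def wGradNorm {n : ℕ} (w : Fin n → ℕ) (f : MvPolynomial (Fin n) ℝ)
    (x : Fin n → ℝ) : ℝ :=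
  Real.sqrt (∑ i, rho w x ^ (2 * w i) * (eval x (pderiv i f)) ^ 2)

/-!
For a real root `u` of `1 + 13 u¹² + 16 u¹⁵`, the curve `t ↦ (t³, u t)` is a branch of the polar
curve `∂f/∂y = 0`; along it `‖∇f‖ = |∂f/∂x| ≍ t¹³` while `‖(x, y)‖ ≍ t`, so no exponent below `13`
works. Conversely, near the origin: where `|y| ≤ |x|` the term `x⁵` dominates `∂f/∂y`, so
`|∂f/∂y| ≥ |x|⁵ / 2 ≥ |x|¹³ / 2`; where `|x| ≤ |y|`, `|∂f/∂x| = |y| (5x⁴ + y¹²) ≥ |y|¹³`.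
Either way `‖∇f‖ ≳ ‖(x, y)‖¹³`.
-/

open Filter Topology

theorem abs_le_eNorm {n : ℕ} (x : Fin n → ℝ) (i : Fin n) : |x i| ≤ eNorm x :=
  Real.abs_le_sqrt (Finset.single_le_sum (fun j _ => sq_nonneg (x j)) (Finset.mem_univ i))

theorem eNorm_fin_two (x : Fin 2 → ℝ) : eNorm x = √(x 0 ^ 2 + x 1 ^ 2) := by
  rw [eNorm, Fin.sum_univ_two]

theorem gradNorm_fin_two (f : MvPolynomial (Fin 2) ℝ) (x : Fin 2 → ℝ) :
    gradNorm f x = √(eval x (pderiv 0 f) ^ 2 + eval x (pderiv 1 f) ^ 2) := by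
  rw [gradNorm, Fin.sum_univ_two]

theorem not_lojIneq_of_curve {n : ℕ} {f : MvPolynomial (Fin n) ℝ} {γ : ℝ → Fin n → ℝ}
    {lam μ A B : ℝ} (hγ : Tendsto γ (𝓝[>] 0) (𝓝 0)) (hB : 0 < B) (hlam : 0 ≤ lam)
    (hlt : lam < μ) (hgrad : ∀ t > 0, gradNorm f (γ t) ≤ A * t ^ μ)
    (hnorm : ∀ t > 0, B * t ≤ eNorm (γ t)) : ¬ LojIneq f lam := by
  rintro ⟨C, hC, U, hU, hloj⟩
  have hsmall : Tendsto (fun t : ℝ => A * t ^ (μ - lam)) (𝓝[>] 0) (𝓝 0) := by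
    have h : Tendsto (fun t : ℝ => t ^ (μ - lam)) (𝓝[>] 0) (𝓝 (0 ^ (μ - lam))) :=
      (Real.continuousAt_rpow_const 0 (μ - lam) (Or.inr (sub_nonneg.2 hlt.le))).tendsto
        |>.mono_left nhdsWithin_le_nhds
    simpa [Real.zero_rpow (sub_pos.2 hlt).ne'] using h.const_mul A
  have hCB : 0 < C * B ^ lam := mul_pos hC (Real.rpow_pos_of_pos hB lam)
  obtain ⟨t, ht, hγU, htA⟩ := (eventually_mem_nhdsWithin.and
    ((hγ.eventually_mem hU).and (hsmall.eventually (gt_mem_nhds hCB)))).exists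
  have ht : 0 < t := ht
  have htlam : 0 < t ^ lam := Real.rpow_pos_of_pos ht lam
  refine lt_irrefl (C * B ^ lam * t ^ lam) ?_
  calc C * B ^ lam * t ^ lam = C * (B * t) ^ lam := by
        rw [Real.mul_rpow hB.le ht.le, mul_assoc]
    _ ≤ C * eNorm (γ t) ^ lam := by gcongr; exact hnorm t ht
    _ ≤ gradNorm f (γ t) := hloj _ hγU
    _ ≤ A * t ^ μ := hgrad t ht
    _ = A * t ^ (μ - lam) * t ^ lam := by rw [mul_assoc, ← Real.rpow_add ht, sub_add_cancel]
    _ < C * B ^ lam * t ^ lam := by gcongr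

namespace LojExample

noncomputable def f : MvPolynomial (Fin 2) ℝ := X 1 * (X 0 ^ 5 + X 0 * X 1 ^ 12 + X 1 ^ 15)

theorem eval_pderiv_zero (x : Fin 2 → ℝ) :
    eval x (pderiv 0 f) = 5 * x 0 ^ 4 * x 1 + x 1 ^ 13 := by
  simp [f]
  ring

theorem eval_pderiv_one (x : Fin 2 → ℝ) :
    eval x (pderiv 1 f) = x 0 ^ 5 + 13 * x 0 * x 1 ^ 12 + 16 * x 1 ^ 15 := by
  simp [f]
  ring

theorem abs_pow_five_le_two_mul_abs {a b : ℝ} (hba : |b| ≤ |a|) (hb : |b| ≤ 1 / 2) :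
    |a| ^ 5 ≤ 2 * |a ^ 5 + 13 * a * b ^ 12 + 16 * b ^ 15| := by
  have hrest : |13 * a * b ^ 12 + 16 * b ^ 15| ≤ |a| ^ 5 / 2 :=
    calc |13 * a * b ^ 12 + 16 * b ^ 15|
        ≤ 13 * |a| * |b| ^ 4 * |b| ^ 8 + 16 * |b| ^ 5 * |b| ^ 10 := by
          refine (abs_add_le _ _).trans (le_of_eq ?_)
          simp only [abs_mul, abs_pow, abs_of_pos (by norm_num : (0 : ℝ) < 13),
            abs_of_pos (by norm_num : (0 : ℝ) < 16)]
          ring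
      _ ≤ 13 * |a| * |a| ^ 4 * (1 / 2) ^ 8 + 16 * |a| ^ 5 * (1 / 2) ^ 10 := by gcongr
      _ ≤ |a| ^ 5 / 2 := by nlinarith [pow_nonneg (abs_nonneg a) 5]
  have htri := abs_sub_abs_le_abs_sub (a ^ 5) (-(13 * a * b ^ 12 + 16 * b ^ 15))
  rw [abs_neg, sub_neg_eq_add, abs_pow, ← add_assoc] at htri
  linarith

theorem sq_add_sq_pow_le {a b : ℝ} (ha : |a| ≤ 1 / 2) (hb : |b| ≤ 1 / 2) :
    (a ^ 2 + b ^ 2) ^ 13 ≤ 2 ^ 16 *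
      ((5 * a ^ 4 * b + b ^ 13) ^ 2 + (a ^ 5 + 13 * a * b ^ 12 + 16 * b ^ 15) ^ 2) := by
  set fx := 5 * a ^ 4 * b + b ^ 13
  set fy := a ^ 5 + 13 * a * b ^ 12 + 16 * b ^ 15
  rcases le_total |b| |a| with hba | hab
  · have ha1 : a ^ 2 ≤ 1 := by nlinarith [sq_abs a, abs_nonneg a]
    calc (a ^ 2 + b ^ 2) ^ 13 ≤ (2 * a ^ 2) ^ 13 := by gcongr; linarith [sq_le_sq.2 hba]
      _ = 2 ^ 13 * (|a| ^ 5) ^ 2 * (a ^ 2) ^ 8 := by rw [← sq_abs a]; ring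
      _ ≤ 2 ^ 13 * (2 * |fy|) ^ 2 * 1 := by
          gcongr
          · exact abs_pow_five_le_two_mul_abs hba hb
          · exact pow_le_one₀ (sq_nonneg a) ha1
      _ ≤ 2 ^ 16 * (fx ^ 2 + fy ^ 2) := by nlinarith [sq_abs fy, sq_nonneg fx]
  · have hfx : (b ^ 13) ^ 2 ≤ fx ^ 2 := by
      have : fx ^ 2 - (b ^ 13) ^ 2 = b ^ 2 * (5 * a ^ 4) * (5 * a ^ 4 + 2 * b ^ 12) := by ring
      nlinarith [show 0 ≤ b ^ 2 * (5 * a ^ 4) * (5 * a ^ 4 + 2 * b ^ 12) by positivity]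
    calc (a ^ 2 + b ^ 2) ^ 13 ≤ (2 * b ^ 2) ^ 13 := by gcongr; linarith [sq_le_sq.2 hab]
      _ = 2 ^ 13 * (b ^ 13) ^ 2 := by ring
      _ ≤ 2 ^ 16 * (fx ^ 2 + fy ^ 2) := by nlinarith [sq_nonneg fy]

theorem lojIneq_thirteen : LojIneq f 13 := by
  refine ⟨2⁻¹ ^ 8, by positivity, Metric.ball 0 (1 / 2), Metric.ball_mem_nhds 0 (by norm_num),
    fun x hx => ?_⟩
  have hcoord (i : Fin 2) : |x i| ≤ 1 / 2 :=
    ((norm_le_pi_norm x i).trans_lt (mem_ball_zero_iff.1 hx)).le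
  rw [Real.rpow_ofNat, eNorm_fin_two, gradNorm_fin_two, eval_pderiv_zero, eval_pderiv_one]
  refine Real.le_sqrt_of_sq_le ?_
  calc (2⁻¹ ^ 8 * √(x 0 ^ 2 + x 1 ^ 2) ^ 13) ^ 2
      = (√(x 0 ^ 2 + x 1 ^ 2) ^ 2) ^ 13 / 2 ^ 16 := by ring
    _ = (x 0 ^ 2 + x 1 ^ 2) ^ 13 / 2 ^ 16 := by rw [Real.sq_sqrt (by positivity)]
    _ ≤ _ := by
        rw [div_le_iff₀ (by positivity), mul_comm]
        exact sq_add_sq_pow_le (hcoord 0) (hcoord 1)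

theorem exists_root_polar : ∃ u : ℝ, 1 + 13 * u ^ 12 + 16 * u ^ 15 = 0 := by
  obtain ⟨u, -, hu⟩ := intermediate_value_Icc (show (-1 : ℝ) ≤ 0 by norm_num)
    (f := fun u : ℝ => 1 + 13 * u ^ 12 + 16 * u ^ 15) (by fun_prop)
    (show (0 : ℝ) ∈ Set.Icc _ _ by norm_num)
  exact ⟨u, hu⟩

theorem not_lojIneq_of_lt {lam : ℝ} (hlam : 0 ≤ lam) (hlt : lam < 13) : ¬ LojIneq f lam := by
  obtain ⟨u, hu⟩ := exists_root_polar
  have hu0 : u ≠ 0 := by rintro rfl; norm_num at hu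
  let γ : ℝ → Fin 2 → ℝ := fun t => ![t ^ 3, u * t]
  refine not_lojIneq_of_curve (γ := γ) (A := |u * (5 + u ^ 12)|) ?_ (abs_pos.2 hu0) hlam hlt
    (fun t ht => le_of_eq ?_) (fun t ht => ?_)
  · have hγ : Continuous γ := by fun_prop
    exact (hγ.tendsto' 0 0 (by simp [γ])).mono_left nhdsWithin_le_nhds
  · have h0 : eval (γ t) (pderiv 0 f) = u * (5 + u ^ 12) * t ^ 13 := by
      rw [eval_pderiv_zero]
      simp only [γ, Matrix.cons_val_zero, Matrix.cons_val_one]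
      ring
    have h1 : eval (γ t) (pderiv 1 f) = 0 := by
      rw [eval_pderiv_one]
      simp only [γ, Matrix.cons_val_zero, Matrix.cons_val_one]
      linear_combination t ^ 15 * hu
    rw [gradNorm_fin_two, h0, h1, Real.rpow_ofNat, zero_pow two_ne_zero, add_zero,
      Real.sqrt_sq_eq_abs, abs_mul, abs_of_pos (pow_pos ht 13)]
  · calc |u| * t = |γ t 1| := by simp [γ, abs_mul, abs_of_pos ht]
      _ ≤ eNorm (γ t) := abs_le_eNorm _ _

end LojExample

theorem stmt15 :
    lojExp (X 1 * ((X 0) ^ 5 + X 0 * (X 1) ^ 12 + (X 1) ^ 15) : MvPolynomial (Fin 2) ℝ) = 13 := by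
  change lojExp LojExample.f = 13
  refine IsLeast.csInf_eq ⟨⟨by norm_num, LojExample.lojIneq_thirteen⟩, fun lam ⟨hpos, hloj⟩ => ?_⟩
  exact le_of_not_gt fun hlt => LojExample.not_lojIneq_of_lt hpos.le hlt hloj
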